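/- arXiv:1709.03266 — 2 statements merged into one kernel-verified Lean document; each statement's English description precedes it below -/
import Mathlib

section
/- Let u₁, v₁, w₁ : [0,∞) → ℝ be continuous nonnegative functions and let c₁ > 0. If u₁(t) ≤ c₁ + ∫₀ᵗ (u₁(s)v₁(s) + w₁(s)) ds for all t ≥ 0, then for every ρ > 0 and all t ≥ 0, u₁(t) ≤ exp(∫₀ᵗ v₁(s) ds) · [c₁ + ρ(exp(∫₀ᵗ w₁(s)/ρ ds) − 1)]. -/
/-!
Fix a horizon `T`. Since `w₁ ≥ 0`, the hypothesis gives
`u₁ t ≤ (c₁ + ∫₀ᵀ w₁) + ∫₀ᵗ u₁ v₁` for `t ≤ T`, so the classical integral Gronwall inequality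
bounds `u₁ T` by `(c₁ + ∫₀ᵀ w₁) · exp (∫₀ᵀ v₁)`; finally `x ≤ ρ (exp (x / ρ) - 1)` because
`1 + y ≤ exp y`. The integral Gronwall inequality itself follows from the differential one: if
`φ' ≤ v φ` and `V' = v`, then `φ · exp (-V)` is antitone.
-/

open Set MeasureTheory intervalIntegral Real

theorem le_mul_exp_div_sub_one (x : ℝ) {ρ : ℝ} (hρ : 0 < ρ) : x ≤ ρ * (exp (x / ρ) - 1) := by
  have := add_one_le_exp (x / ρ)
  calc x = ρ * (x / ρ) := by field_simp
    _ ≤ ρ * (exp (x / ρ) - 1) := by gcongr; linarith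

theorem hasDerivAt_integral_of_continuousOn_Icc {f : ℝ → ℝ} {a b s : ℝ}
    (hf : ContinuousOn f (Icc a b)) (hs : s ∈ Ioo a b) :
    HasDerivAt (fun t => ∫ x in a..t, f x) (f s) s :=
  integral_hasDerivAt_right
    ((hf.mono (Icc_subset_Icc_right hs.2.le)).intervalIntegrable_of_Icc hs.1.le)
    (hf.mono Ioo_subset_Icc_self |>.stronglyMeasurableAtFilter isOpen_Ioo s hs)
    (hf.continuousAt (Icc_mem_nhds hs.1 hs.2))

theorem continuousOn_integral_Icc {f : ℝ → ℝ} {a b : ℝ} (hab : a ≤ b)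
    (hf : ContinuousOn f (Icc a b)) :
    ContinuousOn (fun t => ∫ x in a..t, f x) (Icc a b) := by
  have := continuousOn_primitive_interval (μ := volume) (a := a) (b := b)
    (by rw [uIcc_of_le hab]; exact hf.integrableOn_Icc)
  rwa [uIcc_of_le hab] at this

theorem le_mul_exp_sub_of_hasDerivAt_le_mul {φ φ' V v : ℝ → ℝ} {a b : ℝ} (hab : a ≤ b)
    (hφ : ContinuousOn φ (Icc a b)) (hV : ContinuousOn V (Icc a b))
    (hφ' : ∀ s ∈ Ioo a b, HasDerivAt φ (φ' s) s) (hV' : ∀ s ∈ Ioo a b, HasDerivAt V (v s) s)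
    (hle : ∀ s ∈ Ioo a b, φ' s ≤ v s * φ s) :
    φ b ≤ φ a * exp (V b - V a) := by
  have hanti : AntitoneOn (fun t => φ t * exp (-V t)) (Icc a b) := by
    refine antitoneOn_of_hasDerivWithinAt_nonpos (convex_Icc a b)
      (hφ.mul (continuous_exp.comp_continuousOn hV.neg))
      (f' := fun s => (φ' s - v s * φ s) * exp (-V s)) ?_ ?_
    · intro s hs
      rw [interior_Icc] at hs
      refine (((hφ' s hs).mul ((hV' s hs).neg.exp)).congr_deriv ?_).hasDerivWithinAt
      simp only [Pi.neg_apply]; ring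
    · intro s hs
      rw [interior_Icc] at hs
      exact mul_nonpos_of_nonpos_of_nonneg (sub_nonpos.2 (hle s hs)) (exp_pos _).le
  have hba : φ b * exp (-V b) ≤ φ a * exp (-V a) :=
    hanti (left_mem_Icc.2 hab) (right_mem_Icc.2 hab) hab
  calc φ b = φ b * exp (-V b) * exp (V b) := by rw [mul_assoc, ← exp_add]; simp
    _ ≤ φ a * exp (-V a) * exp (V b) := by gcongr
    _ = φ a * exp (V b - V a) := by rw [mul_assoc, ← exp_add, neg_add_eq_sub]

theorem le_mul_exp_integral_of_le_add_integral_mul {u v : ℝ → ℝ} {a b C : ℝ} (hab : a ≤ b)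
    (hu : ContinuousOn u (Icc a b)) (hv : ContinuousOn v (Icc a b))
    (hv₀ : ∀ t ∈ Icc a b, 0 ≤ v t) (h : ∀ t ∈ Icc a b, u t ≤ C + ∫ s in a..t, u s * v s) :
    u b ≤ C * exp (∫ s in a..b, v s) := by
  have huv := hu.mul hv
  have key := le_mul_exp_sub_of_hasDerivAt_le_mul (φ := fun t => C + ∫ s in a..t, u s * v s)
    (V := fun t => ∫ s in a..t, v s) hab
    (continuousOn_const.add (continuousOn_integral_Icc hab huv)) (continuousOn_integral_Icc hab hv)
    (fun s hs => (hasDerivAt_integral_of_continuousOn_Icc huv hs).const_add C)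
    (fun s hs => hasDerivAt_integral_of_continuousOn_Icc hv hs)
    (fun s hs => by
      have hs' := Ioo_subset_Icc_self hs
      rw [mul_comm (v s)]
      exact mul_le_mul_of_nonneg_right (h s hs') (hv₀ s hs'))
  simp only [integral_same, add_zero, sub_zero] at key
  exact (h b (right_mem_Icc.2 hab)).trans key

theorem gronwall_type_inequality_general
    (u₁ v₁ w₁ : ℝ → ℝ) (c₁ : ℝ)
    (hu_cont : ContinuousOn u₁ (Set.Ici 0))
    (hv_cont : ContinuousOn v₁ (Set.Ici 0))
    (hw_cont : ContinuousOn w₁ (Set.Ici 0))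
    (hv_nonneg : ∀ t ≥ (0:ℝ), 0 ≤ v₁ t)
    (hw_nonneg : ∀ t ≥ (0:ℝ), 0 ≤ w₁ t)
    (hineq : ∀ t ≥ (0:ℝ), u₁ t ≤ c₁ + ∫ s in (0:ℝ)..t, (u₁ s * v₁ s + w₁ s)) :
    ∀ ρ > (0:ℝ), ∀ t ≥ (0:ℝ),
      u₁ t ≤ Real.exp (∫ s in (0:ℝ)..t, v₁ s) *
        (c₁ + ρ * (Real.exp (∫ s in (0:ℝ)..t, w₁ s / ρ) - 1)) := by
  intro ρ hρ T hT
  have hIcc : Icc 0 T ⊆ Ici (0 : ℝ) := Icc_subset_Ici_self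
  have hw_int : IntervalIntegrable w₁ volume 0 T := (hw_cont.mono hIcc).intervalIntegrable_of_Icc hT
  have hbound : ∀ t ∈ Icc 0 T,
      u₁ t ≤ (c₁ + ∫ s in (0:ℝ)..T, w₁ s) + ∫ s in (0:ℝ)..t, u₁ s * v₁ s := by
    intro t ht
    have hsub : Icc 0 t ⊆ Ici (0 : ℝ) := Icc_subset_Ici_self
    have hsplit : ∫ s in (0:ℝ)..t, (u₁ s * v₁ s + w₁ s)
        = (∫ s in (0:ℝ)..t, u₁ s * v₁ s) + ∫ s in (0:ℝ)..t, w₁ s :=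
      integral_add (((hu_cont.mul hv_cont).mono hsub).intervalIntegrable_of_Icc ht.1)
        ((hw_cont.mono hsub).intervalIntegrable_of_Icc ht.1)
    have hmono : ∫ s in (0:ℝ)..t, w₁ s ≤ ∫ s in (0:ℝ)..T, w₁ s :=
      integral_mono_interval le_rfl ht.1 ht.2
        ((ae_restrict_mem (μ := volume) measurableSet_Ioc).mono fun s hs => hw_nonneg s hs.1.le)
        hw_int
    linarith [hineq t ht.1]
  have hgronwall := le_mul_exp_integral_of_le_add_integral_mul hT (hu_cont.mono hIcc)
    (hv_cont.mono hIcc) (fun t ht => hv_nonneg t ht.1) hbound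
  rw [intervalIntegral.integral_div]
  calc u₁ T ≤ (c₁ + ∫ s in (0:ℝ)..T, w₁ s) * exp (∫ s in (0:ℝ)..T, v₁ s) := hgronwall
    _ ≤ _ := by
      rw [mul_comm]
      gcongr
      exact le_mul_exp_div_sub_one _ hρ

/-- Gronwall-type inequality (Lemma 2.1). -/
theorem gronwall_type_inequality
    (u₁ v₁ w₁ : ℝ → ℝ) (c₁ : ℝ) (hc₁ : 0 < c₁)
    (hu_cont : ContinuousOn u₁ (Set.Ici 0))
    (hv_cont : ContinuousOn v₁ (Set.Ici 0))
    (hw_cont : ContinuousOn w₁ (Set.Ici 0))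
    (hu_nonneg : ∀ t ≥ (0:ℝ), 0 ≤ u₁ t)
    (hv_nonneg : ∀ t ≥ (0:ℝ), 0 ≤ v₁ t)
    (hw_nonneg : ∀ t ≥ (0:ℝ), 0 ≤ w₁ t)
    (hineq : ∀ t ≥ (0:ℝ), u₁ t ≤ c₁ + ∫ s in (0:ℝ)..t, (u₁ s * v₁ s + w₁ s)) :
    ∀ ρ > (0:ℝ), ∀ t ≥ (0:ℝ),
      u₁ t ≤ Real.exp (∫ s in (0:ℝ)..t, v₁ s) *
        (c₁ + ρ * (Real.exp (∫ s in (0:ℝ)..t, w₁ s / ρ) - 1)) :=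
  gronwall_type_inequality_general u₁ v₁ w₁ c₁ hu_cont hv_cont hw_cont hv_nonneg hw_nonneg hineq
end

section
/- Let a : [0,∞) → ℝⁿ be continuous and satisfy, for constants k₁ ≥ 1, λ* ∈ ℝ, Γ₀ > 0, T, ω > 0, M_d ≥ 0, δ ∈ ℝ, the integral inequality |a(τ)|e^{λ*τ} ≤ k₁|a(0)| + ∫₀^τ (k₁Γ₀ e^{λ*s}|a(s)| + k₁Tω e^{(λ*−ω)s} M_d e^{δ s}) ds for all τ ≥ 0. Then, with λ** := λ* − k₁Γ₀, for all τ ≥ 0: |a(τ)| ≤ e^{−λ**τ}[k₁|a(0)| + ω(exp(k₁T M_d ∫₀^τ e^{(λ**+k₁Γ₀−ω+δ)s} ds) − 1)]. -/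
/-!
Integral form of Gronwall's inequality: if `u t ≤ c + ∫₀ᵗ (v u + w)` with `v ≥ 0`, then
`e^{-vt} (c + ∫₀ᵗ (v u + w)) - ∫₀ᵗ e^{-vs} w(s) ds` is nonincreasing, because its derivative is
`v e^{-vt} (u t - (c + ∫₀ᵗ (v u + w))) ≤ 0`. Evaluating at `0` gives
`u t ≤ e^{vt} (c + ∫₀ᵗ w)` for `w ≥ 0`. For `u = |a| e^{λ* ·}`, `v = k₁Γ₀` the forcing term
integrates to `ω X` with `X = k₁ T M_d ∫₀ᵗ e^{(λ* - ω + δ) s} ds`, and `X ≤ e^X - 1`.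
-/

open Real Set intervalIntegral

section Gronwall

variable {u w : ℝ → ℝ} {c v : ℝ}

theorem le_exp_mul_add_integral_of_le_add_integral (hu : Continuous u) (hw : Continuous w)
    (hv : 0 ≤ v) (h : ∀ t ≥ 0, u t ≤ c + ∫ s in (0:ℝ)..t, (v * u s + w s))
    {t : ℝ} (ht : 0 ≤ t) :
    u t ≤ exp (v * t) * (c + ∫ s in (0:ℝ)..t, exp (-v * s) * w s) := by
  set g : ℝ → ℝ := fun t => c + ∫ s in (0:ℝ)..t, (v * u s + w s)
  set F : ℝ → ℝ := fun t => exp (-v * t) * g t - ∫ s in (0:ℝ)..t, exp (-v * s) * w s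
  have hF : ∀ t, HasDerivAt F (v * exp (-v * t) * (u t - g t)) t := by
    intro t
    have hexp : HasDerivAt (fun t => exp (-v * t)) (exp (-v * t) * -v) t := by
      simpa using ((hasDerivAt_id t).const_mul (-v)).exp
    have hg : HasDerivAt g (v * u t + w t) t :=
      ((by fun_prop : Continuous fun s => v * u s + w s)
        |>.integral_hasStrictDerivAt 0 t).hasDerivAt.const_add c
    have hW := ((by fun_prop : Continuous fun s => exp (-v * s) * w s)
      |>.integral_hasStrictDerivAt 0 t).hasDerivAt
    exact ((hexp.mul hg).sub hW).congr_deriv (by ring)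
  have hF_anti : AntitoneOn F (Ici 0) :=
    antitoneOn_of_hasDerivWithinAt_nonpos (convex_Ici 0)
      (fun t _ => (hF t).continuousAt.continuousWithinAt) (fun t _ => (hF t).hasDerivWithinAt)
      fun t ht => mul_nonpos_of_nonneg_of_nonpos (by positivity)
        (sub_nonpos.2 (h t (interior_subset ht)))
  have hF_le : F t ≤ c := by
    simpa [F, g] using hF_anti self_mem_Ici ht ht
  calc u t ≤ g t := h t ht
    _ = exp (v * t) * (exp (-v * t) * g t) := by
      rw [← mul_assoc, ← exp_add, neg_mul, add_neg_cancel, exp_zero, one_mul]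
    _ ≤ exp (v * t) * (c + ∫ s in (0:ℝ)..t, exp (-v * s) * w s) := by
      gcongr
      linarith [hF_le]

theorem le_exp_mul_add_integral_of_le_add_integral_of_nonneg (hu : Continuous u)
    (hw : Continuous w) (hv : 0 ≤ v) (hw₀ : ∀ s ≥ 0, 0 ≤ w s)
    (h : ∀ t ≥ 0, u t ≤ c + ∫ s in (0:ℝ)..t, (v * u s + w s)) {t : ℝ} (ht : 0 ≤ t) :
    u t ≤ exp (v * t) * (c + ∫ s in (0:ℝ)..t, w s) := by
  refine (le_exp_mul_add_integral_of_le_add_integral hu hw hv h ht).trans ?_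
  gcongr
  refine integral_mono_on ht
    ((by fun_prop : Continuous fun s => exp (-v * s) * w s).intervalIntegrable 0 t)
    (hw.intervalIntegrable 0 t) fun s hs => ?_
  have hexp_le : exp (-v * s) ≤ 1 := exp_le_one_iff.2 (by nlinarith [hs.1])
  nlinarith [hw₀ s hs.1]

end Gronwall

theorem key_solution_estimate (n : ℕ)
    (a : ℝ → EuclideanSpace ℝ (Fin n)) (ha : Continuous a)
    (k₁ lamStar Γ₀ T ω Md δ : ℝ)
    (hk₁ : 1 ≤ k₁) (hΓ₀ : 0 < Γ₀) (hT : 0 < T) (hω : 0 < ω) (hMd : 0 ≤ Md)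
    (hineq : ∀ τ ≥ (0:ℝ),
      ‖a τ‖ * Real.exp (lamStar * τ) ≤ k₁ * ‖a 0‖ +
        ∫ s in (0:ℝ)..τ,
          (k₁ * Γ₀ * Real.exp (lamStar * s) * ‖a s‖ +
            k₁ * T * ω * Real.exp ((lamStar - ω) * s) * (Md * Real.exp (δ * s)))) :
    ∀ τ ≥ (0:ℝ),
      ‖a τ‖ ≤ Real.exp (-(lamStar - k₁ * Γ₀) * τ) *
        (k₁ * ‖a 0‖ +
          ω * (Real.exp (k₁ * T * Md *
            ∫ s in (0:ℝ)..τ, Real.exp (((lamStar - k₁ * Γ₀) + k₁ * Γ₀ - ω + δ) * s)) - 1)) := by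
  intro τ hτ
  have hk₀ : 0 ≤ k₁ := zero_le_one.trans hk₁
  have hintegrand : (fun s => k₁ * Γ₀ * exp (lamStar * s) * ‖a s‖ +
      k₁ * T * ω * exp ((lamStar - ω) * s) * (Md * exp (δ * s))) = fun s =>
      k₁ * Γ₀ * (‖a s‖ * exp (lamStar * s)) + ω * (k₁ * T * Md) * exp ((lamStar - ω + δ) * s) := by
    funext s; rw [add_mul (lamStar - ω), exp_add]; ring
  have hgronwall := le_exp_mul_add_integral_of_le_add_integral_of_nonneg
    (u := fun s => ‖a s‖ * exp (lamStar * s)) (v := k₁ * Γ₀)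
    (w := fun s => ω * (k₁ * T * Md) * exp ((lamStar - ω + δ) * s)) (by fun_prop) (by fun_prop)
    (by positivity) (fun s _ => by positivity) (fun t ht => hintegrand ▸ hineq t ht) hτ
  simp only [sub_add_cancel]
  set X := k₁ * T * Md * ∫ s in (0:ℝ)..τ, exp ((lamStar - ω + δ) * s)
  rw [integral_const_mul, mul_assoc ω] at hgronwall
  rw [← mul_le_mul_iff_of_pos_right (exp_pos (lamStar * τ)), mul_right_comm, ← exp_add]
  calc ‖a τ‖ * exp (lamStar * τ) ≤ exp (k₁ * Γ₀ * τ) * (k₁ * ‖a 0‖ + ω * X) := hgronwall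
    _ ≤ exp (-(lamStar - k₁ * Γ₀) * τ + lamStar * τ) * (k₁ * ‖a 0‖ + ω * (exp X - 1)) := by
      rw [show -(lamStar - k₁ * Γ₀) * τ + lamStar * τ = k₁ * Γ₀ * τ by ring]
      gcongr
      linarith [add_one_le_exp X]
end
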